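/- arXiv:0907.2857 — 5 statements merged into one kernel-verified Lean document; each statement's English description precedes it below -/
import Mathlib

section
/- Let R be a commutative Noetherian ring of prime characteristic p, let R[x,f] be the Frobenius skew polynomial ring, let H be a left R[x,f]-module, let a ∈ R, and let b be an ideal of R generated by elements b₁, …, b_w. Then H is b-testable if and only if H is b_i-testable for every i = 1, …, w. -/
/-! Testability of `a` only asks that `a` kill certain elements of `H`, so the testable
elements form an ideal, and an ideal lies in it as soon as its generators do. -/

/-- `R°`: the complement of the union of the minimal primes of `R`. -/
def Rcirc (R : Type) [CommRing R] : Set R := {c | ∀ P ∈ minimalPrimes R, c ∉ P}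

/-- A left `R[x,f]`-module (encoded by the `R`-module `H` and the action `X` of `x`)
is `a`-testable if whenever `h ∈ H` and `c ∈ R°` satisfy `c·x^n·h = 0` for all `n ≫ 0`,
then `a·x^n·h = 0` for all `n ≥ 0`. -/
def IsTestable (R : Type) [CommRing R] {H : Type} [AddCommGroup H] [Module R H]
    (X : H →+ H) (a : R) : Prop :=
  ∀ (h : H) (c : R), c ∈ Rcirc R → (∃ N : ℕ, ∀ n ≥ N, c • (⇑X)^[n] h = 0) →
    ∀ n : ℕ, a • (⇑X)^[n] h = 0

section

variable {R : Type} [CommRing R] {H : Type} [AddCommGroup H] [Module R H] (X : H →+ H)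

def testableIdeal : Ideal R where
  carrier := {a | IsTestable R X a}
  zero_mem' := fun h c _ _ n => zero_smul R _
  add_mem' {a b} ha hb h c hc hN n := by
    rw [add_smul, ha h c hc hN n, hb h c hc hN n, add_zero]
  smul_mem' r a ha h c hc hN n := by
    rw [smul_eq_mul, mul_smul, ha h c hc hN n, smul_zero]

end

theorem isTestable_ideal_iff_general (R : Type) [CommRing R]
    (H : Type) [AddCommGroup H] [Module R H] (X : H →+ H)
    (w : ℕ) (b : Fin w → R) :
    (∀ r ∈ Ideal.span (Set.range b), IsTestable R X r) ↔ ∀ i, IsTestable R X (b i) :=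
  show Ideal.span (Set.range b) ≤ testableIdeal X ↔ ∀ i, b i ∈ testableIdeal X from
    Ideal.span_le.trans Set.range_subset_iff

/-- for an ideal `b` generated by `b₁, …, b_w`, a left `R[x,f]`-module `H` is
`b`-testable if and only if it is `b_i`-testable for every `i`. -/
theorem isTestable_ideal_iff (R : Type) [CommRing R] [IsNoetherianRing R]
    (p : ℕ) [Fact p.Prime] [CharP R p]
    (H : Type) [AddCommGroup H] [Module R H] (X : H →+ H)
    (hX : ∀ (r : R) (h : H), X (r • h) = r ^ p • X h)
    (w : ℕ) (b : Fin w → R) :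
    (∀ r ∈ Ideal.span (Set.range b), IsTestable R X r) ↔ ∀ i, IsTestable R X (b i) :=
  isTestable_ideal_iff_general R H X w b
end

section
/- Let θ : R → R' be a homomorphism of commutative Noetherian rings of prime characteristic p. Then θ induces a ring homomorphism θ̃ : R[x,f] → R'[x,f] with θ̃(Σ r_i x^i) = Σ θ(r_i) x^i, and for any left R'[x,f]-module H' (viewed as a left R[x,f]-module via θ̃), every special annihilator submodule of H' over R[x,f] is also a special annihilator submodule of H' over R'[x,f], i.e., 𝒜_{R[x,f]}(H') ⊆ 𝒜_{R'[x,f]}(H'). -/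
/-! The chain of extended ideals `θ(bᵢ)R'` does it: the annihilator of an element of `H'` is an
ideal of `R'`, so it contains `θ(bᵢ)R'` as soon as it contains `θ(bᵢ)`. -/

theorem Ideal.forall_mem_map_smul_eq_zero_iff {R S M : Type*} [CommSemiring R] [CommSemiring S]
    [AddCommMonoid M] [Module S M] (θ : R →+* S) (I : Ideal R) (y : M) :
    (∀ s ∈ I.map θ, s • y = 0) ↔ ∀ r ∈ I, θ r • y = 0 := by
  simpa only [SetLike.le_def, Submodule.mem_annihilator_span_singleton, Ideal.mem_comap] using
    (Ideal.map_le_iff_le_comap (f := θ) (K := (S ∙ y).annihilator))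

theorem specialAnnihilator_mem_of_baseChange_general
    (R R' : Type) [CommRing R] [CommRing R'] (θ : R →+* R')
    (H' : Type) [AddCommGroup H'] [Module R' H'] (X : H' →+ H')
    (G : Set H')
    (hG : ∃ b : ℕ → Ideal R, (∀ i, b i ≤ b (i + 1)) ∧
      G = {h : H' | ∀ i : ℕ, ∀ r ∈ b i, θ r • (⇑X)^[i] h = 0}) :
    ∃ b' : ℕ → Ideal R', (∀ i, b' i ≤ b' (i + 1)) ∧
      G = {h : H' | ∀ i : ℕ, ∀ r ∈ b' i, r • (⇑X)^[i] h = 0} := by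
  obtain ⟨b, hb, rfl⟩ := hG
  refine ⟨fun i ↦ (b i).map θ, fun i ↦ Ideal.map_mono (hb i), ?_⟩
  ext h
  simp only [Set.mem_ofPred_eq, Ideal.forall_mem_map_smul_eq_zero_iff]

/-- for a ring homomorphism `θ : R → R'` and a left `R'[x,f]`-module `H'`,
every special annihilator submodule of `H'` over `R[x,f]` is a special annihilator
submodule of `H'` over `R'[x,f]`, i.e. `𝒜_{R[x,f]}(H') ⊆ 𝒜_{R'[x,f]}(H')`. -/
theorem specialAnnihilator_mem_of_baseChange
    (R R' : Type) [CommRing R] [IsNoetherianRing R] [CommRing R'] [IsNoetherianRing R']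
    (p : ℕ) [Fact p.Prime] [CharP R p] [CharP R' p] (θ : R →+* R')
    (H' : Type) [AddCommGroup H'] [Module R' H'] (X : H' →+ H')
    (hX : ∀ (r : R') (h : H'), X (r • h) = r ^ p • X h)
    (G : Set H')
    (hG : ∃ b : ℕ → Ideal R, (∀ i, b i ≤ b (i + 1)) ∧
      G = {h : H' | ∀ i : ℕ, ∀ r ∈ b i, θ r • (⇑X)^[i] h = 0}) :
    ∃ b' : ℕ → Ideal R', (∀ i, b' i ≤ b' (i + 1)) ∧
      G = {h : H' | ∀ i : ℕ, ∀ r ∈ b' i, r • (⇑X)^[i] h = 0} :=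
  specialAnnihilator_mem_of_baseChange_general R R' θ H' X G hG
end

section
/- Let R be a commutative Noetherian ring of prime characteristic p, S a multiplicatively closed subset of R, and ξ : R → S⁻¹R the natural homomorphism. For a left (S⁻¹R)[x,f]-module H' (viewed as left R[x,f]-module via the induced ring map R[x,f] → (S⁻¹R)[x,f]), the sets of special annihilator submodules coincide: 𝒜_{R[x,f]}(H') = 𝒜_{(S⁻¹R)[x,f]}(H'). -/
/-! An ideal of `R` kills a vector exactly when its extension to `S⁻¹R` does, so the special
annihilator of a chain `(bᵢ)` of ideals of `R` is that of the extended chain `(bᵢ S⁻¹R)`.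
Conversely every ideal of `S⁻¹R` is the extension of its contraction to `R`. -/

/-- The special annihilator `ann_M(⊕ bᵢ xⁱ)` of the graded ideal with components `b i`, where
`X` is the action of `x` on `M`. -/
def specialAnnihilator {A M : Type} [CommRing A] [AddCommGroup M] [Module A M]
    (X : M → M) (b : ℕ → Ideal A) : Set M :=
  {h | ∀ i, ∀ r ∈ b i, r • X^[i] h = 0}

theorem forall_map_smul_eq_zero_iff {R A M : Type} [CommRing R] [CommRing A] [Algebra R A]
    [AddCommGroup M] [Module A M] (I : Ideal R) (v : M) :
    (∀ s ∈ I.map (algebraMap R A), s • v = 0) ↔ ∀ r ∈ I, algebraMap R A r • v = 0 := by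
  simpa only [SetLike.le_def, Ideal.mem_comap, Submodule.mem_annihilator_span_singleton]
    using Ideal.map_le_iff_le_comap (f := algebraMap R A) (I := I) (K := (A ∙ v).annihilator)

theorem specialAnnihilator_map {R A M : Type} [CommRing R] [CommRing A] [Algebra R A]
    [AddCommGroup M] [Module A M] (X : M → M) (b : ℕ → Ideal R) :
    specialAnnihilator X (fun i => (b i).map (algebraMap R A)) =
      {h | ∀ i, ∀ r ∈ b i, algebraMap R A r • X^[i] h = 0} := by
  ext h
  exact forall_congr' fun i => forall_map_smul_eq_zero_iff (b i) _

theorem specialAnnihilators_localization_eq_general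
    (R : Type) [CommRing R]
    (S : Submonoid R)
    (H' : Type) [AddCommGroup H'] [Module (Localization S) H'] (X : H' →+ H') :
    {G : Set H' | ∃ b : ℕ → Ideal R, (∀ i, b i ≤ b (i + 1)) ∧
        G = {h : H' | ∀ i : ℕ, ∀ r ∈ b i, algebraMap R (Localization S) r • (⇑X)^[i] h = 0}} =
    {G : Set H' | ∃ b' : ℕ → Ideal (Localization S), (∀ i, b' i ≤ b' (i + 1)) ∧
        G = {h : H' | ∀ i : ℕ, ∀ r ∈ b' i, r • (⇑X)^[i] h = 0}} := by
  ext G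
  constructor
  · rintro ⟨b, hb, rfl⟩
    exact ⟨fun i => (b i).map _, fun i => Ideal.map_mono (hb i),
      (specialAnnihilator_map X b).symm⟩
  · rintro ⟨b', hb', rfl⟩
    refine ⟨fun i => (b' i).comap (algebraMap R (Localization S)),
      fun i => Ideal.comap_mono (hb' i), ?_⟩
    rw [← specialAnnihilator_map]
    simp only [IsLocalization.map_under S]
    rfl

/-- for a multiplicatively closed subset `S` of `R` and a left
`(S⁻¹R)[x,f]`-module `H'`, the special annihilator submodules of `H'` over `R[x,f]` and
over `(S⁻¹R)[x,f]` coincide: `𝒜_{R[x,f]}(H') = 𝒜_{(S⁻¹R)[x,f]}(H')`. -/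
theorem specialAnnihilators_localization_eq
    (R : Type) [CommRing R] [IsNoetherianRing R] (p : ℕ) [Fact p.Prime] [CharP R p]
    (S : Submonoid R)
    (H' : Type) [AddCommGroup H'] [Module (Localization S) H'] (X : H' →+ H')
    (hX : ∀ (r : Localization S) (h : H'), X (r • h) = r ^ p • X h) :
    {G : Set H' | ∃ b : ℕ → Ideal R, (∀ i, b i ≤ b (i + 1)) ∧
        G = {h : H' | ∀ i : ℕ, ∀ r ∈ b i, algebraMap R (Localization S) r • (⇑X)^[i] h = 0}} =
    {G : Set H' | ∃ b' : ℕ → Ideal (Localization S), (∀ i, b' i ≤ b' (i + 1)) ∧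
        G = {h : H' | ∀ i : ℕ, ∀ r ∈ b' i, r • (⇑X)^[i] h = 0}} :=
  specialAnnihilators_localization_eq_general R S H' X
end

section
/- Let R be a commutative Noetherian ring of prime characteristic p, let W = ⊕_{n≥b} W_n be a graded left R[x,f]-module (b ≥ 1), let (g_i)_{i∈I} be a family of elements of W_b, and let W' = Ext(W; (g_i); 1) be the 1-place extension of W by (g_i). If W is a-testable for some a ∈ R, then W' is a-testable. -/
/-- Iterates of the `x`-action on a graded left `R[x,f]`-module (indexed by `ℕ`, starting
at the bottom degree), from position `n` to position `n + k`. -/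
def XiterN {W : ℕ → Type} [∀ n, AddCommGroup (W n)] (X : ∀ n, W n →+ W (n + 1)) :
    (k : ℕ) → (n : ℕ) → (W n →+ W (n + k))
  | 0, _ => AddMonoidHom.id _
  | (k + 1), n => (X (n + k)).comp (XiterN X k n)

/-- A graded left `R[x,f]`-module is `a`-testable if whenever a (homogeneous) element `h`
and `c ∈ R°` satisfy `c·xᵏ·h = 0` for all `k ≫ 0`, then `a·xᵏ·h = 0` for all `k ≥ 0`. -/
def IsTestableN (R : Type) [CommRing R] {W : ℕ → Type} [∀ n, AddCommGroup (W n)]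
    [∀ n, Module R (W n)] (X : ∀ n, W n →+ W (n + 1)) (a : R) : Prop :=
  ∀ (n : ℕ) (h : W n) (c : R), c ∈ Rcirc R →
    (∃ N : ℕ, ∀ k ≥ N, c • XiterN X k n h = 0) → ∀ k : ℕ, a • XiterN X k n h = 0

section XiterN

variable {W : ℕ → Type} [∀ n, AddCommGroup (W n)]

theorem XiterN_succ_eq_XiterN_shift (X : ∀ n, W n →+ W (n + 1)) (k n : ℕ) (h : W n) :
    XiterN X (k + 1) n h = XiterN (fun j => X (j + 1)) k n (X n h) := by
  induction k with
  | zero => rfl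
  | succ k ih => exact congrArg (X (n + k + 1)) ih

theorem map_cast_index (X : ∀ n, W n →+ W (n + 1)) {n₁ n₂ : ℕ} (hn : n₁ = n₂)
    (w : W n₁) :
    X n₂ (cast (congrArg W hn) w) = cast (congrArg (fun n => W (n + 1)) hn) (X n₁ w) := by
  subst hn
  rfl

theorem XiterN_eq_cast_XiterN_shift (X : ∀ n, W n →+ W (n + 1)) (k m : ℕ) (h : W (m + 1)) :
    XiterN X k (m + 1) h =
      cast (congrArg W (Nat.add_right_comm m k 1)) (XiterN (fun j => X (j + 1)) k m h) := by
  induction k with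
  | zero => rfl
  | succ k ih =>
    change X (m + 1 + k) (XiterN X k (m + 1) h) = _
    rw [ih, map_cast_index X (Nat.add_right_comm m k 1)]
    rfl

theorem smul_cast_eq_zero_iff {R : Type} [CommRing R] [∀ n, Module R (W n)] {n₁ n₂ : ℕ}
    (hn : n₁ = n₂) (r : R) (w : W n₁) : r • cast (congrArg W hn) w = 0 ↔ r • w = 0 := by
  subst hn
  rfl

theorem XiterN_map {W' : ℕ → Type} [∀ n, AddCommGroup (W' n)] (X : ∀ n, W n →+ W (n + 1))
    (X' : ∀ n, W' n →+ W' (n + 1)) (φ : ∀ n, W' n → W n)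
    (hφ : ∀ n w, φ (n + 1) (X' n w) = X n (φ n w)) (k m : ℕ) (w : W' m) :
    XiterN X k m (φ m w) = φ (m + k) (XiterN X' k m w) := by
  induction k with
  | zero => rfl
  | succ k ih => exact (congrArg (X (m + k)) ih).trans (hφ _ _).symm

end XiterN

section Shift

variable {R : Type} [CommRing R] {W W' : ℕ → Type}
  [∀ n, AddCommGroup (W n)] [∀ n, Module R (W n)]
  [∀ n, AddCommGroup (W' n)] [∀ n, Module R (W' n)]
  (X : ∀ n, W n →+ W (n + 1)) (X' : ∀ n, W' n →+ W' (n + 1))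
  {e : ∀ k, W' (k + 1) ≃ₗ[R] W k}

theorem smul_XiterN_shift_eq_zero_iff
    (he : ∀ (k : ℕ) (w : W' (k + 1)), e (k + 1) (X' (k + 1) w) = X k (e k w))
    (r : R) (k m : ℕ) (h : W' (m + 1)) :
    r • XiterN (fun j => X' (j + 1)) k m h = 0 ↔ r • XiterN X k m (e m h) = 0 := by
  rw [XiterN_map X (fun j => X' (j + 1)) (fun j => e j) he, ← (e (m + k)).map_smul,
    LinearEquiv.map_eq_zero_iff]

theorem smul_XiterN_succ_index_eq_zero_iff
    (he : ∀ (k : ℕ) (w : W' (k + 1)), e (k + 1) (X' (k + 1) w) = X k (e k w))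
    (r : R) (k m : ℕ) (h : W' (m + 1)) :
    r • XiterN X' k (m + 1) h = 0 ↔ r • XiterN X k m (e m h) = 0 := by
  rw [XiterN_eq_cast_XiterN_shift, smul_cast_eq_zero_iff (Nat.add_right_comm m k 1),
    smul_XiterN_shift_eq_zero_iff X X' he]

theorem smul_XiterN_succ_eq_zero_iff
    (he : ∀ (k : ℕ) (w : W' (k + 1)), e (k + 1) (X' (k + 1) w) = X k (e k w))
    (r : R) (k n : ℕ) (h : W' n) :
    r • XiterN X' (k + 1) n h = 0 ↔ r • XiterN X k n (e n (X' n h)) = 0 := by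
  rw [XiterN_succ_eq_XiterN_shift, smul_XiterN_shift_eq_zero_iff X X' he]

end Shift

theorem Finsupp.sum_smul_pow_smul {R M I : Type} [CommRing R] [AddCommGroup M] [Module R M]
    {p : ℕ} (hp : p ≠ 0) (a : R) (v : I →₀ R) (g : I → M) :
    ((a • v).sum fun i c => c ^ p • g i) = a ^ p • v.sum fun i c => c ^ p • g i := by
  rw [Finsupp.sum_smul_index' fun i => by rw [zero_pow hp, zero_smul], Finsupp.smul_sum]
  exact Finsupp.sum_congr fun i _ => by rw [smul_eq_mul, mul_pow, mul_smul]

theorem pow_smul_eq_zero_of_smul_eq_zero {R M : Type} [CommRing R] [AddCommGroup M]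
    [Module R M] {a : R} {w : M} (hw : a • w = 0) {p : ℕ} (hp : p ≠ 0) : a ^ p • w = 0 := by
  rw [← Nat.sub_add_cancel (Nat.one_le_iff_ne_zero.2 hp), pow_succ, mul_smul, hw, smul_zero]

/-- `W k` is the component of degree `b + k` of `W`, `W' 0 = V/f⁻¹(K)` is the new component of
degree `b - 1` with canonical map `π : V → V/f⁻¹(K)`, and `e` identifies `W' (k + 1)` with
`W k`. -/
theorem onePlaceExtension_isTestable_general
    (R : Type) [CommRing R] (p : ℕ) [Fact p.Prime]
    (a : R) (I : Type)
    (W : ℕ → Type) [∀ n, AddCommGroup (W n)] [∀ n, Module R (W n)]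
    (X : ∀ n, W n →+ W (n + 1))
    (g : I → W 0)
    (W' : ℕ → Type) [∀ n, AddCommGroup (W' n)] [∀ n, Module R (W' n)]
    (X' : ∀ n, W' n →+ W' (n + 1))
    (e : ∀ k, W' (k + 1) ≃ₗ[R] W k)
    (he : ∀ (k : ℕ) (w : W' (k + 1)), e (k + 1) (X' (k + 1) w) = X k (e k w))
    (π : (I →₀ R) →ₗ[R] W' 0) (hπ : Function.Surjective π)
    (hker : ∀ v : I →₀ R, π v = 0 ↔ (v.sum fun i c => c ^ p • g i) = 0)
    (hx0 : ∀ v : I →₀ R, e 0 (X' 0 (π v)) = v.sum fun i c => c ^ p • g i)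
    (htest : IsTestableN R X a) :
    IsTestableN R X' a := by
  rintro (_ | m) h c hc ⟨N, hN⟩
  · obtain ⟨v, rfl⟩ := hπ h
    have hw := htest 0 _ c hc ⟨N, fun k hk =>
      (smul_XiterN_succ_eq_zero_iff X X' he c k 0 _).1 (hN (k + 1) (by omega))⟩
    rintro (_ | k)
    · have hp : p ≠ 0 := (Fact.out : p.Prime).ne_zero
      change a • π v = 0
      rw [← map_smul, hker, Finsupp.sum_smul_pow_smul hp, ← hx0]
      exact pow_smul_eq_zero_of_smul_eq_zero (hw 0) hp
    · exact (smul_XiterN_succ_eq_zero_iff X X' he a k 0 _).2 (hw k)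
  · have hw := htest m _ c hc ⟨N, fun k hk =>
      (smul_XiterN_succ_index_eq_zero_iff X X' he c k m h).1 (hN k hk)⟩
    exact fun k => (smul_XiterN_succ_index_eq_zero_iff X X' he a k m h).2 (hw k)

/-- if `W = ⊕_{n ≥ b} W_n` is a graded left `R[x,f]`-module, `(g_i)_{i∈I}` a
family in `W_b`, and `W' = Ext(W; (g_i); 1)` the 1-place extension of `W` by `(g_i)` — here
`W k` denotes the component of degree `b + k`, `W' 0 = V/f⁻¹(K)` is the new component of
degree `b - 1` (`π` being the canonical map `V = ⊕_{i∈I} R → V/f⁻¹(K)`, whose kernel is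
`f⁻¹(K) = {v : Σᵢ vᵢ^p gᵢ = 0}`), `W' (k+1) ≅ W k` compatibly with the `x`-actions, and
`x·π(v) = Σᵢ vᵢ^p gᵢ` — then: if `W` is `a`-testable, so is `W'`. -/
theorem onePlaceExtension_isTestable
    (R : Type) [CommRing R] [IsNoetherianRing R] (p : ℕ) [Fact p.Prime] [CharP R p]
    (a : R) (I : Type)
    (W : ℕ → Type) [∀ n, AddCommGroup (W n)] [∀ n, Module R (W n)]
    (X : ∀ n, W n →+ W (n + 1))
    (hX : ∀ (n : ℕ) (r : R) (h : W n), X n (r • h) = r ^ p • X n h)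
    (g : I → W 0)
    (W' : ℕ → Type) [∀ n, AddCommGroup (W' n)] [∀ n, Module R (W' n)]
    (X' : ∀ n, W' n →+ W' (n + 1))
    (hX' : ∀ (n : ℕ) (r : R) (h : W' n), X' n (r • h) = r ^ p • X' n h)
    (e : ∀ k, W' (k + 1) ≃ₗ[R] W k)
    (he : ∀ (k : ℕ) (w : W' (k + 1)), e (k + 1) (X' (k + 1) w) = X k (e k w))
    (π : (I →₀ R) →ₗ[R] W' 0) (hπ : Function.Surjective π)
    (hker : ∀ v : I →₀ R, π v = 0 ↔ (v.sum fun i c => c ^ p • g i) = 0)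
    (hx0 : ∀ v : I →₀ R, e 0 (X' 0 (π v)) = v.sum fun i c => c ^ p • g i)
    (htest : IsTestableN R X a) :
    IsTestableN R X' a :=
  onePlaceExtension_isTestable_general R p a I W X g W' X' e he π hπ hker hx0 htest
end

section
/- Let R be a commutative Noetherian ring of prime characteristic p. If R is F-pure, then for every R-module N, the left R[x,f]-module R[x,f] ⊗_R N is x-torsion-free. -/
open scoped TensorProduct

/-- `Rxⁿ`, the `n`-th graded component of the Frobenius skew polynomial ring `R[x,f]`:
a copy of `R` viewed as an `R`-algebra via `iterateFrobenius R p n`, so that `Rxⁿ ⊗_R N`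
is `FrobTwist R p n ⊗[R] N`, with `r xⁿ ⊗ g` corresponding to `r ⊗ g`. -/
def FrobTwist (R : Type) (p n : ℕ) : Type := R

instance (R : Type) (p n : ℕ) [CommRing R] : CommRing (FrobTwist R p n) :=
  inferInstanceAs (CommRing R)

instance (R : Type) (p n : ℕ) [CommRing R] [Fact p.Prime] [CharP R p] :
    Algebra R (FrobTwist R p n) :=
  (show R →+* FrobTwist R p n from iterateFrobenius R p n).toAlgebra

/-- The identity map `FrobTwist R p n → R`. -/
def FrobTwist.un {R : Type} {p n : ℕ} (a : FrobTwist R p n) : R := a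

/-- The identity map `R → FrobTwist R p n`. -/
def FrobTwist.mk (R : Type) (p n : ℕ) (a : R) : FrobTwist R p n := a

/-- `R` is `F`-pure if for every `R`-module `N` the map `ψ_N : N → Rx ⊗_R N`,
`g ↦ x ⊗ g`, is injective. -/
def IsFPure (R : Type) [CommRing R] (p : ℕ) [Fact p.Prime] [CharP R p] : Prop :=
  ∀ (N : Type) [AddCommGroup N] [Module R N],
    Function.Injective fun g : N => (1 : FrobTwist R p 1) ⊗ₜ[R] g

/-- The map `a ↦ a^p : Rxⁿ → Rxⁿ⁺¹` is `R`-linear. -/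
def frobPow (R : Type) (p n : ℕ) [CommRing R] [Fact p.Prime] [CharP R p] :
    FrobTwist R p n →ₗ[R] FrobTwist R p (n + 1) where
  toFun a := FrobTwist.mk R p (n + 1) (a.un ^ p)
  map_add' a b := by
    show FrobTwist.mk R p (n + 1) ((a.un + b.un) ^ p)
      = FrobTwist.mk R p (n + 1) (a.un ^ p + b.un ^ p)
    rw [add_pow_char]
  map_smul' r a := by
    show FrobTwist.mk R p (n + 1) ((r ^ p ^ n * a.un) ^ p)
      = FrobTwist.mk R p (n + 1) (r ^ p ^ (n + 1) * a.un ^ p)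
    rw [mul_pow, ← pow_mul, ← pow_succ]

/-- The action of `x` on the `n`-th graded component `Rxⁿ ⊗_R N` of `R[x,f] ⊗_R N`:
`r xⁿ ⊗ g ↦ r^p xⁿ⁺¹ ⊗ g`. -/
noncomputable def tensorX (R : Type) (p : ℕ) [CommRing R] [Fact p.Prime] [CharP R p]
    (N : Type) [AddCommGroup N] [Module R N] (n : ℕ) :
    FrobTwist R p n ⊗[R] N →+ FrobTwist R p (n + 1) ⊗[R] N :=
  (TensorProduct.map (frobPow R p n) LinearMap.id).toAddMonoidHom

/-!
The identification `Rxⁿ⁺¹ ⊗_R N ≅ Rx ⊗_R (Rxⁿ ⊗_R N)`, `b ⊗ g ↦ b ⊗ (1 ⊗ g)`, carries the action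
of `x` on `Rxⁿ ⊗_R N` to the map `ψ` of the `R`-module `Rxⁿ ⊗_R N` (with `R` acting on the left
factor), which is injective because `R` is `F`-pure. So `x`, and hence every power of `x`, acts
injectively on each graded piece of `R[x,f] ⊗_R N`.
-/

section FrobeniusTwist

variable (R : Type) [CommRing R] (p : ℕ) [Fact p.Prime] [CharP R p]
variable (N : Type) [AddCommGroup N] [Module R N]

/-- `Rxⁿ ⊗_R N` with the `R`-module structure of a graded piece of the left `R[x,f]`-module
`R[x,f] ⊗_R N`: `r` acts by multiplication on the first factor, not through `Rxⁿ`'s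
twisted `R`-algebra structure. -/
def TensorComponent (n : ℕ) : Type := FrobTwist R p n ⊗[R] N

noncomputable instance (n : ℕ) : AddCommGroup (TensorComponent R p N n) :=
  inferInstanceAs (AddCommGroup (FrobTwist R p n ⊗[R] N))

noncomputable instance (n : ℕ) : Module R (TensorComponent R p N n) :=
  inferInstanceAs (Module (FrobTwist R p n) (FrobTwist R p n ⊗[R] N))

def TensorComponent.ofTensor (n : ℕ) : FrobTwist R p n ⊗[R] N ≃+ TensorComponent R p N n :=
  AddEquiv.refl _

variable {R p N}

theorem FrobTwist.smul_def {n : ℕ} (r : R) (a : FrobTwist R p n) :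
    r • a = FrobTwist.mk R p n (r ^ p ^ n * a.un) := rfl

theorem FrobTwist.smul_one {n : ℕ} (r : R) :
    r • (1 : FrobTwist R p n) = FrobTwist.mk R p n (r ^ p ^ n) :=
  congrArg (FrobTwist.mk R p n) (mul_one _)

theorem TensorComponent.ofTensor_tmul {n : ℕ} (a : FrobTwist R p n) (g : N) :
    ofTensor R p N n (a ⊗ₜ g) = a.un • ofTensor R p N n ((1 : FrobTwist R p n) ⊗ₜ g) := by
  show a ⊗ₜ[R] g = a • ((1 : FrobTwist R p n) ⊗ₜ[R] g)
  rw [TensorProduct.smul_tmul', smul_eq_mul, mul_one]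

theorem TensorComponent.ofTensor_one_tmul_smul {n : ℕ} (r : R) (g : N) :
    ofTensor R p N n ((1 : FrobTwist R p n) ⊗ₜ (r • g))
      = r ^ p ^ n • ofTensor R p N n ((1 : FrobTwist R p n) ⊗ₜ g) := by
  rw [← TensorProduct.smul_tmul, FrobTwist.smul_one, ofTensor_tmul]
  rfl

open TensorComponent in
noncomputable def tensorComponentSucc (n : ℕ) :
    FrobTwist R p (n + 1) ⊗[R] N →+ FrobTwist R p 1 ⊗[R] TensorComponent R p N n :=
  TensorProduct.liftAddHom
    (AddMonoidHom.mk'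
      (fun b => AddMonoidHom.mk'
        (fun g => FrobTwist.mk R p 1 b.un ⊗ₜ ofTensor R p N n ((1 : FrobTwist R p n) ⊗ₜ g))
        (fun g g' => by simp only [TensorProduct.tmul_add, map_add]))
      (fun b b' => by ext g; exact TensorProduct.add_tmul _ _ _))
    (fun r b g => by
      show FrobTwist.mk R p 1 (r ^ p ^ (n + 1) * b.un) ⊗ₜ _ = _
      rw [AddMonoidHom.mk'_apply, AddMonoidHom.mk'_apply, ofTensor_one_tmul_smul,
        TensorProduct.tmul_smul, TensorProduct.smul_tmul', FrobTwist.smul_def, pow_one,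
        pow_succ, pow_mul]
      rfl)

theorem tensorComponentSucc_tensorX (n : ℕ) (h : FrobTwist R p n ⊗[R] N) :
    tensorComponentSucc n (tensorX R p N n h)
      = (1 : FrobTwist R p 1) ⊗ₜ TensorComponent.ofTensor R p N n h := by
  induction h using TensorProduct.induction_on with
  | zero => simp only [map_zero, TensorProduct.tmul_zero]
  | tmul a g =>
    rw [TensorComponent.ofTensor_tmul, TensorProduct.tmul_smul, TensorProduct.smul_tmul',
      FrobTwist.smul_one, pow_one]
    rfl
  | add x y hx hy => simp only [map_add, hx, hy, TensorProduct.tmul_add]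

theorem tensorX_injective_of_isFPure (hFP : IsFPure R p) (n : ℕ) :
    Function.Injective (tensorX R p N n) := fun h h' e =>
  (TensorComponent.ofTensor R p N n).injective <| hFP (TensorComponent R p N n) <| by
    simp only [← tensorComponentSucc_tensorX, e]

end FrobeniusTwist

theorem XiterN_injective {W : ℕ → Type} [∀ n, AddCommGroup (W n)] {X : ∀ n, W n →+ W (n + 1)}
    (hX : ∀ n, Function.Injective (X n)) (k n : ℕ) : Function.Injective (XiterN X k n) := by
  induction k with
  | zero => exact Function.injective_id
  | succ k ih => exact (hX (n + k)).comp ih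

theorem tensor_xTorsionFree_of_isFPure_general (R : Type) [CommRing R]
    (p : ℕ) [Fact p.Prime] [CharP R p] (hFP : IsFPure R p)
    (N : Type) [AddCommGroup N] [Module R N] :
    ∀ (n : ℕ) (h : FrobTwist R p n ⊗[R] N),
      (∃ k : ℕ, 1 ≤ k ∧ XiterN (tensorX R p N) k n h = 0) → h = 0 := by
  rintro n h ⟨k, -, hk⟩
  exact XiterN_injective (tensorX_injective_of_isFPure hFP) k n (hk.trans (map_zero _).symm)

/-- if `R` is `F`-pure, then for every `R`-module `N` the left
`R[x,f]`-module `R[x,f] ⊗_R N = ⊕ₙ Rxⁿ ⊗_R N` is `x`-torsion-free (no nonzero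
homogeneous element is killed by a power of `x`). -/
theorem tensor_xTorsionFree_of_isFPure (R : Type) [CommRing R] [IsNoetherianRing R]
    (p : ℕ) [Fact p.Prime] [CharP R p] (hFP : IsFPure R p)
    (N : Type) [AddCommGroup N] [Module R N] :
    ∀ (n : ℕ) (h : FrobTwist R p n ⊗[R] N),
      (∃ k : ℕ, 1 ≤ k ∧ XiterN (tensorX R p N) k n h = 0) → h = 0 :=
  tensor_xTorsionFree_of_isFPure_general R p hFP N
end
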